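/- arXiv:1909.02718 — 2 statements merged into one kernel-verified Lean document; each statement's English description precedes it below -/
import Mathlib

section
/- Let G be a connected graph that does not belong to the family G^cs (i.e., there exists a weight function w with s(G,w) < cs(G,w)). If S is a minimum weighted safe set of (G,w) for some weight function w with s(G,w) < cs(G,w), then the bipartite 'component graph' β(G,S) — whose vertices are the components of G[S] and of G−S, with two components adjacent exactly when some edge of G joins them — also does not belong to G^cs. -/
open SimpleGraph
open scoped Classical

variable {V : Type*} [Fintype V]

noncomputable def setWeight (w : V → ℝ) (A : Set V) : ℝ :=
  ∑ v : V, if v ∈ A then w v else 0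

def IsComponentOf (G : SimpleGraph V) (S C : Set V) : Prop :=
  ∃ c : (G.induce S).ConnectedComponent,
    C = Subtype.val '' {x : ↥S | (G.induce S).connectedComponentMk x = c}

def Touches (G : SimpleGraph V) (C D : Set V) : Prop :=
  ∃ a ∈ C, ∃ b ∈ D, G.Adj a b

def IsSafeSet (G : SimpleGraph V) (w : V → ℝ) (S : Set V) : Prop :=
  S.Nonempty ∧ S ≠ Set.univ ∧
    ∀ C D : Set V, IsComponentOf G S C → IsComponentOf G Sᶜ D → Touches G C D →
      setWeight w D ≤ setWeight w C

def IsConnSafeSet (G : SimpleGraph V) (w : V → ℝ) (S : Set V) : Prop :=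
  IsSafeSet G w S ∧ (G.induce S).Connected

noncomputable def safeNumber (G : SimpleGraph V) (w : V → ℝ) : ℝ :=
  sInf (setWeight w '' {S | IsSafeSet G w S})

noncomputable def connSafeNumber (G : SimpleGraph V) (w : V → ℝ) : ℝ :=
  sInf (setWeight w '' {S | IsConnSafeSet G w S})

def InGcs (G : SimpleGraph V) : Prop :=
  ∀ w : V → ℝ, (∀ v, 0 < w v) → safeNumber G w = connSafeNumber G w

def betaVerts (G : SimpleGraph V) (S : Set V) : Set (Set V) :=
  {C | IsComponentOf G S C ∨ IsComponentOf G Sᶜ C}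

def betaGraph (G : SimpleGraph V) (S : Set V) : SimpleGraph ↥(betaVerts G S) where
  Adj C D := C ≠ D ∧ Touches G C.1 D.1
  symm := by
    constructor
    rintro C D ⟨hne, a, ha, b, hb, hab⟩
    exact ⟨hne.symm, b, hb, a, ha, hab.symm⟩
  loopless := by constructor; rintro C ⟨hne, _⟩; exact hne rfl


/-! Contracting every component of `G[S]` and of `G - S` to a single vertex turns `G` into
`β(G, S)`, and `w` pushes forward to the weight `w' C = w(C)`. Since `β(G, S)` is bipartite
between the two kinds of components, the components of `G[S]` form a safe set of `(β(G, S), w')`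
of weight `w(S) = s(G, w)`. Conversely, components of the preimage of a vertex set of a
contraction are preimages of components, so the preimage of a connected safe set of
`(β(G, S), w')` is a connected safe set of `(G, w)` of the same weight. Thus `β(G, S) ∈ G^cs`
would give `cs(G, w) ≤ cs(β(G, S), w') = s(β(G, S), w') ≤ s(G, w)`. -/

section Components

variable {X : Type*} {G : SimpleGraph X} {A C D : Set X} {a b v : X}

theorem isComponentOf_iff :
    IsComponentOf G A C ↔ ∃ x : A, C = {u | ∃ hu : u ∈ A, (G.induce A).Reachable x ⟨u, hu⟩} := by
  constructor
  · rintro ⟨c, rfl⟩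
    induction c using ConnectedComponent.ind with | h x => ?_
    exact ⟨x, Set.ext fun u => by simp [reachable_comm (u := x)]⟩
  · rintro ⟨x, rfl⟩
    exact ⟨(G.induce A).connectedComponentMk x, Set.ext fun u => by simp [reachable_comm (u := x)]⟩

theorem exists_isComponentOf_mem (hv : v ∈ A) : ∃ C, IsComponentOf G A C ∧ v ∈ C :=
  ⟨_, isComponentOf_iff.2 ⟨⟨v, hv⟩, rfl⟩, hv, Reachable.refl _⟩

namespace IsComponentOf

theorem subset (h : IsComponentOf G A C) : C ⊆ A := by
  obtain ⟨x, rfl⟩ := isComponentOf_iff.1 h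
  exact fun u ⟨hu, _⟩ => hu

theorem nonempty (h : IsComponentOf G A C) : C.Nonempty := by
  obtain ⟨x, rfl⟩ := isComponentOf_iff.1 h
  exact ⟨x, x.2, Reachable.refl _⟩

theorem mem_of_adj (h : IsComponentOf G A C) (ha : a ∈ C) (hb : b ∈ A) (hab : G.Adj a b) :
    b ∈ C := by
  obtain ⟨x, rfl⟩ := isComponentOf_iff.1 h
  obtain ⟨_, hxa⟩ := ha
  exact ⟨hb, hxa.trans (Adj.reachable (G := G.induce A) hab)⟩

theorem eq_of_mem (hC : IsComponentOf G A C) (hD : IsComponentOf G A D) (hvC : v ∈ C)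
    (hvD : v ∈ D) : C = D := by
  obtain ⟨x, rfl⟩ := isComponentOf_iff.1 hC
  obtain ⟨y, rfl⟩ := isComponentOf_iff.1 hD
  obtain ⟨_, hxv⟩ := hvC
  obtain ⟨_, hyv⟩ := hvD
  ext u
  exact exists_congr fun _ => ⟨(hyv.trans hxv.symm).trans, (hxv.trans hyv.symm).trans⟩

theorem preconnected (h : IsComponentOf G A C) : (G.induce C).Preconnected := by
  obtain ⟨c, rfl⟩ := h
  let g : (G.induce A).induce c.supp →g G.induce (Subtype.val '' c.supp) :=
    { toFun := fun x => ⟨x.1.1, x.1, x.2, rfl⟩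
      map_rel' := id }
  refine (ConnectedComponent.connected_toSimpleGraph c).preconnected.map g ?_
  rintro ⟨_, x, hx, rfl⟩
  exact ⟨⟨x, hx⟩, rfl⟩

theorem eq_singleton (hA : G.IsIndepSet A) (h : IsComponentOf G A C) : ∃ a ∈ A, C = {a} := by
  obtain ⟨x, rfl⟩ := isComponentOf_iff.1 h
  refine ⟨x, x.2, Set.ext fun u => ⟨fun ⟨hu, ⟨p⟩⟩ => ?_, fun hu => ⟨hu ▸ x.2, by subst hu; rfl⟩⟩⟩
  cases p with
  | nil => rfl
  | cons hadj _ => exact (hA x.2 (Subtype.property _) (G.ne_of_adj hadj) hadj).elim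

end IsComponentOf

end Components

section SafeSets

variable {X : Type*} [Fintype X] {G : SimpleGraph X} {w : X → ℝ} {A S : Set X}

theorem setWeight_pos (hw : ∀ v, 0 < w v) (hA : A.Nonempty) : 0 < setWeight w A := by
  obtain ⟨a, ha⟩ := hA
  refine Finset.sum_pos' (fun v _ => ?_) ⟨a, Finset.mem_univ a, by simp [ha, hw a]⟩
  split_ifs
  exacts [(hw v).le, le_rfl]

theorem setWeight_singleton (w : X → ℝ) (a : X) : setWeight w {a} = w a := by
  simp [setWeight]

theorem safeNumber_le (hS : IsSafeSet G w S) : safeNumber G w ≤ setWeight w S :=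
  csInf_le (Set.toFinite _).bddBelow ⟨S, hS, rfl⟩

theorem connSafeNumber_le (hS : IsConnSafeSet G w S) : connSafeNumber G w ≤ setWeight w S :=
  csInf_le (Set.toFinite _).bddBelow ⟨S, hS, rfl⟩

theorem exists_setWeight_eq_sInf {P : Set (Set X)} (hP : P.Nonempty) :
    ∃ S ∈ P, setWeight w S = sInf (setWeight w '' P) :=
  (hP.image _).csInf_mem (Set.toFinite _)

theorem safeNumber_pos (hw : ∀ v, 0 < w v) (hS : IsSafeSet G w S) : 0 < safeNumber G w := by
  obtain ⟨T, hT, hTw⟩ := exists_setWeight_eq_sInf (w := w) (P := {T | IsSafeSet G w T}) ⟨S, hS⟩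
  exact (setWeight_pos hw hT.1).trans_eq hTw

theorem exists_isConnSafeSet_of_connSafeNumber_pos (h : 0 < connSafeNumber G w) :
    ∃ T, IsConnSafeSet G w T ∧ setWeight w T = connSafeNumber G w := by
  refine exists_setWeight_eq_sInf (P := {T | IsConnSafeSet G w T})
    (Set.nonempty_iff_ne_empty.2 fun hempty => h.ne' ?_)
  rw [connSafeNumber, hempty, Set.image_empty, Real.sInf_empty]

theorem isSafeSet_of_isIndepSet (hA : G.IsIndepSet A) (hAc : G.IsIndepSet Aᶜ) (hne : A.Nonempty)
    (hnu : A ≠ Set.univ) (hw : ∀ a ∈ A, ∀ b ∉ A, G.Adj a b → w b ≤ w a) : IsSafeSet G w A := by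
  refine ⟨hne, hnu, fun C D hC hD hCD => ?_⟩
  obtain ⟨a, ha, rfl⟩ := hC.eq_singleton hA
  obtain ⟨b, hb, rfl⟩ := hD.eq_singleton hAc
  obtain ⟨_, rfl, _, rfl, hab⟩ := hCD
  rw [setWeight_singleton, setWeight_singleton]
  exact hw _ ha _ hb hab

end SafeSets

section Contraction

variable {X Y : Type*}

structure IsContraction (G : SimpleGraph X) (H : SimpleGraph Y) (f : X → Y) : Prop where
  surjective : f.Surjective
  adj_iff : ∀ p q, H.Adj p q ↔ p ≠ q ∧ ∃ a b, f a = p ∧ f b = q ∧ G.Adj a b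
  preconnected_fiber : ∀ p, (G.induce (f ⁻¹' {p})).Preconnected

noncomputable def fiberWeight [Fintype X] (f : X → Y) (w : X → ℝ) (p : Y) : ℝ :=
  setWeight w (f ⁻¹' {p})

theorem setWeight_fiberWeight [Fintype X] [Fintype Y] (f : X → Y) (w : X → ℝ) (U : Set Y) :
    setWeight (fiberWeight f w) U = setWeight w (f ⁻¹' U) := by
  simp only [setWeight, fiberWeight, Set.mem_preimage, Set.mem_singleton_iff]
  rw [← Finset.sum_fiberwise Finset.univ f]
  refine Finset.sum_congr rfl fun p _ => ?_
  rw [Finset.sum_filter]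
  by_cases hp : p ∈ U
  · refine (if_pos hp).trans (Finset.sum_congr rfl fun a _ => ?_)
    by_cases ha : f a = p <;> simp [ha, hp]
  · simp +contextual [hp]

namespace IsContraction

variable {G : SimpleGraph X} {H : SimpleGraph Y} {f : X → Y} {U : Set Y}

theorem reachable_of_eq (hf : IsContraction G H f) {u v : ↥(f ⁻¹' U)} (huv : f u = f v) :
    (G.induce (f ⁻¹' U)).Reachable u v := by
  have hsub : f ⁻¹' {f u} ⊆ f ⁻¹' U := fun x hx => (congrArg (· ∈ U) hx).mpr u.2
  exact (hf.preconnected_fiber (f u) ⟨u, rfl⟩ ⟨v, huv.symm⟩).map (G.induceHomOfLE hsub).toHom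

theorem reachable_induce_preimage_iff (hf : IsContraction G H f) (u v : ↥(f ⁻¹' U)) :
    (G.induce (f ⁻¹' U)).Reachable u v ↔ (H.induce U).Reachable ⟨f u, u.2⟩ ⟨f v, v.2⟩ := by
  constructor
  · intro huv
    rw [reachable_iff_reflTransGen] at huv ⊢
    refine Relation.ReflTransGen.lift' (fun x : ↥(f ⁻¹' U) => (⟨f x, x.2⟩ : U))
      (fun a b hab => ?_) _ _ huv
    change Relation.ReflTransGen _ (⟨f a, a.2⟩ : U) ⟨f b, b.2⟩
    by_cases h : f a = f b
    · rw [show (⟨f a, a.2⟩ : U) = ⟨f b, b.2⟩ from Subtype.ext h]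
    · exact .single ((hf.adj_iff _ _).2 ⟨h, a, b, rfl, rfl, hab⟩)
  · intro hpq
    rw [reachable_iff_reflTransGen] at hpq
    suffices ∀ q : U, Relation.ReflTransGen (H.induce U).Adj ⟨f u, u.2⟩ q →
        ∀ v : ↥(f ⁻¹' U), f v = q → (G.induce (f ⁻¹' U)).Reachable u v from this _ hpq v rfl
    intro q hq
    induction hq with
    | refl => exact fun v hv => hf.reachable_of_eq hv.symm
    | @tail q r _ hqr ih =>
      intro v hv
      obtain ⟨-, a, b, ha, hb, hab⟩ := (hf.adj_iff _ _).1 hqr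
      let a' : ↥(f ⁻¹' U) := ⟨a, show f a ∈ U from ha ▸ q.2⟩
      let b' : ↥(f ⁻¹' U) := ⟨b, show f b ∈ U from hb ▸ r.2⟩
      have hab' : (G.induce (f ⁻¹' U)).Adj a' b' := hab
      exact (ih a' ha).trans (hab'.reachable.trans (hf.reachable_of_eq (hb.trans hv.symm)))

theorem connected_induce_preimage (hf : IsContraction G H f) (hU : (H.induce U).Connected) :
    (G.induce (f ⁻¹' U)).Connected := by
  obtain ⟨p, hp⟩ := hU.nonempty
  obtain ⟨u, rfl⟩ := hf.surjective p
  have : Nonempty ↥(f ⁻¹' U) := ⟨⟨u, hp⟩⟩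
  exact ⟨fun u v => (hf.reachable_induce_preimage_iff u v).2 (hU.preconnected _ _)⟩

theorem exists_isComponentOf_eq_preimage (hf : IsContraction G H f) {C : Set X}
    (hC : IsComponentOf G (f ⁻¹' U) C) : ∃ K, IsComponentOf H U K ∧ C = f ⁻¹' K := by
  obtain ⟨x, rfl⟩ := isComponentOf_iff.1 hC
  exact ⟨_, isComponentOf_iff.2 ⟨⟨f x, x.2⟩, rfl⟩,
    Set.ext fun u => exists_congr fun hu => hf.reachable_induce_preimage_iff x ⟨u, hu⟩⟩

variable [Fintype X] [Fintype Y] {w : X → ℝ} {T : Set Y}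

theorem isSafeSet_preimage (hf : IsContraction G H f) (hT : IsSafeSet H (fiberWeight f w) T) :
    IsSafeSet G w (f ⁻¹' T) := by
  obtain ⟨⟨p, hp⟩, hTu, hsafe⟩ := hT
  obtain ⟨q, hq⟩ := (Set.ne_univ_iff_exists_notMem T).1 hTu
  obtain ⟨u, rfl⟩ := hf.surjective p
  obtain ⟨v, rfl⟩ := hf.surjective q
  refine ⟨⟨u, hp⟩, (Set.ne_univ_iff_exists_notMem _).2 ⟨v, hq⟩, fun C D hC hD hCD => ?_⟩
  rw [← Set.preimage_compl] at hD
  obtain ⟨K, hK, rfl⟩ := hf.exists_isComponentOf_eq_preimage hC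
  obtain ⟨L, hL, rfl⟩ := hf.exists_isComponentOf_eq_preimage hD
  obtain ⟨a, ha, b, hb, hab⟩ := hCD
  have hne : f a ≠ f b := fun h => hL.subset hb (h ▸ hK.subset ha)
  rw [← setWeight_fiberWeight, ← setWeight_fiberWeight]
  exact hsafe K L hK hL ⟨f a, ha, f b, hb, (hf.adj_iff _ _).2 ⟨hne, a, b, rfl, rfl, hab⟩⟩

theorem isConnSafeSet_preimage (hf : IsContraction G H f)
    (hT : IsConnSafeSet H (fiberWeight f w) T) : IsConnSafeSet G w (f ⁻¹' T) :=
  ⟨hf.isSafeSet_preimage hT.1, hf.connected_induce_preimage hT.2⟩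

end IsContraction

end Contraction

section Beta

variable {X : Type*} {G : SimpleGraph X} {S A : Set X} {v : X}

theorem exists_mem_betaVerts (G : SimpleGraph X) (S : Set X) (v : X) :
    ∃ C ∈ betaVerts G S, v ∈ C := by
  by_cases hv : v ∈ S
  · obtain ⟨C, hC, hvC⟩ := exists_isComponentOf_mem (G := G) hv
    exact ⟨C, .inl hC, hvC⟩
  · obtain ⟨C, hC, hvC⟩ := exists_isComponentOf_mem (G := G) (A := Sᶜ) hv
    exact ⟨C, .inr hC, hvC⟩

theorem eq_of_mem_betaVerts {C D : Set X} (hC : C ∈ betaVerts G S) (hD : D ∈ betaVerts G S)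
    (hvC : v ∈ C) (hvD : v ∈ D) : C = D := by
  rcases hC with hC | hC <;> rcases hD with hD | hD
  · exact hC.eq_of_mem hD hvC hvD
  · exact absurd (hC.subset hvC) (hD.subset hvD)
  · exact absurd (hD.subset hvD) (hC.subset hvC)
  · exact hC.eq_of_mem hD hvC hvD

variable (G S) in
noncomputable def betaVertOf (v : X) : betaVerts G S :=
  ⟨_, (exists_mem_betaVerts G S v).choose_spec.1⟩

theorem betaVertOf_eq_iff {C : betaVerts G S} : betaVertOf G S v = C ↔ v ∈ C.1 := by
  have hv := (exists_mem_betaVerts G S v).choose_spec.2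
  refine ⟨fun h => h ▸ hv, fun hvC => Subtype.ext ?_⟩
  exact eq_of_mem_betaVerts (betaVertOf G S v).2 C.2 hv hvC

theorem preimage_betaVertOf_singleton (C : betaVerts G S) : betaVertOf G S ⁻¹' {C} = C.1 :=
  Set.ext fun _ => betaVertOf_eq_iff

theorem isContraction_betaVertOf (G : SimpleGraph X) (S : Set X) :
    IsContraction G (betaGraph G S) (betaVertOf G S) where
  surjective C := by
    obtain ⟨v, hv⟩ : C.1.Nonempty := C.2.elim IsComponentOf.nonempty IsComponentOf.nonempty
    exact ⟨v, betaVertOf_eq_iff.2 hv⟩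
  adj_iff C D := by
    simp [betaGraph, Touches, betaVertOf_eq_iff]
  preconnected_fiber C := by
    rw [preimage_betaVertOf_singleton]
    exact C.2.elim IsComponentOf.preconnected IsComponentOf.preconnected

theorem not_betaGraph_adj_of_isComponentOf {C D : betaVerts G S} (hC : IsComponentOf G A C.1)
    (hD : IsComponentOf G A D.1) : ¬ (betaGraph G S).Adj C D := by
  rintro ⟨hne, a, ha, b, hb, hab⟩
  exact hne (Subtype.ext (hC.eq_of_mem hD (hC.mem_of_adj ha (hD.subset hb) hab) hb))

theorem preimage_betaVertOf_setOf_isComponentOf :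
    betaVertOf G S ⁻¹' {C | IsComponentOf G S C.1} = S := by
  ext v
  have hv : v ∈ (betaVertOf G S v).1 := betaVertOf_eq_iff.1 rfl
  refine ⟨fun h => h.subset hv, fun hvS => ?_⟩
  rcases (betaVertOf G S v).2 with h | h
  exacts [h, absurd hvS (h.subset hv)]

theorem isSafeSet_setOf_isComponentOf [Fintype X] {w : X → ℝ} (hS : IsSafeSet G w S) :
    IsSafeSet (betaGraph G S) (fiberWeight (betaVertOf G S) w) {C | IsComponentOf G S C.1} := by
  have hc : ∀ C : betaVerts G S, ¬ IsComponentOf G S C.1 → IsComponentOf G Sᶜ C.1 :=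
    fun C hC => C.2.resolve_left hC
  obtain ⟨⟨s, hs⟩, hSu, hsafe⟩ := hS
  obtain ⟨t, ht⟩ := (Set.ne_univ_iff_exists_notMem S).1 hSu
  have hpre := Set.ext_iff.1 (preimage_betaVertOf_setOf_isComponentOf (G := G) (S := S))
  refine isSafeSet_of_isIndepSet ?_ ?_ ?_ ?_ ?_
  · exact fun C hC D hD _ => not_betaGraph_adj_of_isComponentOf hC hD
  · exact fun C hC D hD _ => not_betaGraph_adj_of_isComponentOf (hc C hC) (hc D hD)
  · exact ⟨betaVertOf G S s, (hpre s).2 hs⟩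
  · exact (Set.ne_univ_iff_exists_notMem _).2 ⟨betaVertOf G S t, fun h => ht ((hpre t).1 h)⟩
  · rintro C hC D hD ⟨-, hCD⟩
    simp only [fiberWeight, preimage_betaVertOf_singleton]
    exact hsafe C D hC (hc D hD) hCD

end Beta

theorem stmt_1_general (G : SimpleGraph V) (w : V → ℝ) (hw : ∀ v, 0 < w v)
    (hlt : safeNumber G w < connSafeNumber G w) (S : Set V)
    (hS : IsSafeSet G w S) (hmin : setWeight w S = safeNumber G w) :
    ¬ InGcs (betaGraph G S) := by
  intro hβ
  have hf := isContraction_betaVertOf G S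
  set w' := fiberWeight (betaVertOf G S) w
  have hw' : ∀ C, 0 < w' C := fun C =>
    setWeight_pos hw ((hf.surjective C).imp fun _ => Set.mem_preimage.2)
  have hSβ := isSafeSet_setOf_isComponentOf hS
  have hle : safeNumber (betaGraph G S) w' ≤ setWeight w S := by
    simpa only [setWeight_fiberWeight, preimage_betaVertOf_setOf_isComponentOf]
      using safeNumber_le hSβ
  have hpos := safeNumber_pos hw' hSβ
  rw [hβ w' hw'] at hle hpos
  obtain ⟨T, hT, hTw⟩ := exists_isConnSafeSet_of_connSafeNumber_pos hpos
  have hGT : connSafeNumber G w ≤ setWeight w' T :=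
    setWeight_fiberWeight (betaVertOf G S) w T ▸ connSafeNumber_le (hf.isConnSafeSet_preimage hT)
  linarith

theorem stmt_1 (G : SimpleGraph V) (hG : G.Connected) (w : V → ℝ) (hw : ∀ v, 0 < w v)
    (hlt : safeNumber G w < connSafeNumber G w) (S : Set V)
    (hS : IsSafeSet G w S) (hmin : setWeight w S = safeNumber G w) :
    ¬ InGcs (betaGraph G S) :=
  stmt_1_general G w hw hlt S hS hmin
end

section
/- Let G be a connected graph contractible to the graph H2 obtained from a 4-cycle u1u2u3u4 by adding a pendant vertex u5 adjacent to u4, with bags V1,...,V5 such that V2 and V4 induce connected subgraphs. If |E_G(V1,V2)| = |E_G(V2,V3)| = 1, then G does not belong to G^cs. -/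
open SimpleGraph
open scoped Classical

variable {V : Type*} [Fintype V]

def ContractibleTo {W : Type*} (G : SimpleGraph V) (H : SimpleGraph W) (φ : V → W) : Prop :=
  Function.Surjective φ ∧ ∀ i j : W, i ≠ j →
    ((∃ a b : V, φ a = i ∧ φ b = j ∧ G.Adj a b) ↔ H.Adj i j)

/-- The graph `H₂`: a 4-cycle `u₁u₂u₃u₄` (vertices `0,1,2,3`) together with a pendant
vertex `u₅` (vertex `4`) adjacent to `u₄` (vertex `3`). -/
def H2graph : SimpleGraph (Fin 5) :=
  SimpleGraph.fromRel (fun i j =>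
    (i, j) ∈ [((0 : Fin 5), (1 : Fin 5)), (1, 2), (2, 3), (0, 3), (3, 4)])

def edgePairs (G : SimpleGraph V) (A B : Set V) : Set (V × V) :=
  {p : V × V | p.1 ∈ A ∧ p.2 ∈ B ∧ G.Adj p.1 p.2}


set_option linter.unusedSectionVars false

-- ===== auxiliary lemmas =====


lemma SG8_setWeight_nonneg {w : V → ℝ} (hw : ∀ v, 0 ≤ w v) (A : Set V) :
    0 ≤ setWeight w A := by
  unfold setWeight
  refine Finset.sum_nonneg fun v _ => ?_
  by_cases h : v ∈ A <;> simp [h, hw v]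

lemma SG8_setWeight_mono {w : V → ℝ} (hw : ∀ v, 0 ≤ w v) {A B : Set V} (h : A ⊆ B) :
    setWeight w A ≤ setWeight w B := by
  unfold setWeight
  refine Finset.sum_le_sum fun v _ => ?_
  by_cases hv : v ∈ A
  · simp [hv, h hv]
  · by_cases hv' : v ∈ B <;> simp [hv, hv', hw v]

lemma SG8_setWeight_empty (w : V → ℝ) : setWeight w (∅ : Set V) = 0 := by
  simp [setWeight]

lemma SG8_setWeight_insert {w : V → ℝ} {a : V} {A : Set V} (ha : a ∉ A) :
    setWeight w (insert a A) = w a + setWeight w A := by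
  have hrhs : w a + setWeight w A
      = ∑ v : V, ((if v = a then w v else 0) + (if v ∈ A then w v else 0)) := by
    rw [Finset.sum_add_distrib]
    congr 1
    rw [Finset.sum_ite_eq' Finset.univ a w]
    simp
  rw [hrhs]
  unfold setWeight
  refine Finset.sum_congr rfl fun v _ => ?_
  by_cases hva : v = a
  · subst hva; simp [ha]
  · by_cases hvA : v ∈ A <;> simp [Set.mem_insert_iff, hva, hvA]

lemma SG8_setWeight_singleton (w : V → ℝ) (a : V) : setWeight w {a} = w a := by
  have h1 : ({a} : Set V) = insert a (∅ : Set V) := by simp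
  rw [h1, SG8_setWeight_insert (by simp), SG8_setWeight_empty]; ring

lemma SG8_setWeight_pair {w : V → ℝ} {a b : V} (h : a ≠ b) :
    setWeight w ({a, b} : Set V) = w a + w b := by
  rw [show ({a, b} : Set V) = insert a {b} from rfl,
    SG8_setWeight_insert (by simp [h]), SG8_setWeight_singleton]

lemma SG8_setWeight_triple {w : V → ℝ} {a b c : V} (hab : a ≠ b) (hac : a ≠ c) (hbc : b ≠ c) :
    setWeight w ({a, b, c} : Set V) = w a + w b + w c := by
  rw [show ({a, b, c} : Set V) = insert a {b, c} from rfl,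
    SG8_setWeight_insert (by simp [hab, hac]), SG8_setWeight_pair hbc]; ring

/-- split a set's weight into its part inside `H` and the rest. -/
lemma SG8_setWeight_split (w : V → ℝ) (S H : Set V) :
    setWeight w S = setWeight w (S ∩ H) + setWeight w (S \ H) := by
  have hrhs : setWeight w (S ∩ H) + setWeight w (S \ H)
      = ∑ v : V, ((if v ∈ S ∩ H then w v else 0) + (if v ∈ S \ H then w v else 0)) := by
    unfold setWeight
    rw [Finset.sum_add_distrib]
    congr 1
    · refine Finset.sum_congr rfl fun v _ => ?_
      by_cases h : v ∈ S ∩ H <;> simp [h]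
    · refine Finset.sum_congr rfl fun v _ => ?_
      by_cases h : v ∈ S \ H <;> simp [h]
  rw [hrhs]
  unfold setWeight
  refine Finset.sum_congr rfl fun v _ => ?_
  by_cases hS : v ∈ S <;> by_cases hH : v ∈ H <;>
    simp [hS, hH, Set.mem_inter_iff, Set.mem_diff]

/-- if every element of `A` has weight at most `ε`, then the total is at most `card V * ε`. -/
lemma SG8_setWeight_le_card_mul {w : V → ℝ} {A : Set V} {ε : ℝ} (hε : 0 ≤ ε)
    (h : ∀ v ∈ A, w v ≤ ε) :
    setWeight w A ≤ (Fintype.card V : ℝ) * ε := by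
  unfold setWeight
  refine le_trans (Finset.sum_le_sum (g := fun _ => ε) fun v _ => ?_) ?_
  · by_cases hv : v ∈ A
    · simpa [hv] using h v hv
    · simpa [hv] using hε
  · rw [Finset.sum_const, nsmul_eq_mul, Finset.card_univ]

-- ===== walk lemmas =====

/-- Along a walk from inside `P` to outside `P`, there is a crossing edge whose inner endpoint
is reachable from the start inside the induced subgraph on `P`. -/
lemma SG8_boundary {α : Type*} (H : SimpleGraph α) (P : α → Prop) :
    ∀ {u v : α}, H.Walk u v → ∀ (hu : P u), ¬ P v →
      ∃ a b : α, H.Adj a b ∧ ¬ P b ∧ ∃ ha : P a,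
        (H.induce (setOf P)).Reachable ⟨u, hu⟩ ⟨a, ha⟩ := by
  intro u v W
  induction W with
  | nil => intro hu hv; exact absurd hu hv
  | @cons u u' v hadj W ih =>
    intro hu hv
    by_cases hP : P u'
    · obtain ⟨a, b, hab, hb, ha, hr⟩ := ih hP hv
      refine ⟨a, b, hab, hb, ha, ?_⟩
      refine Reachable.trans ?_ hr
      exact SimpleGraph.Adj.reachable (by simpa using hadj)
    · exact ⟨u, u', hadj, hP, hu, Reachable.refl _⟩

/-- If `A` is closed under taking neighbours within an induced subgraph, walks starting
in `A` stay in `A`. -/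
lemma SG8_confine {α : Type*} (H : SimpleGraph α) (A : α → Prop)
    (hcl : ∀ u v, A u → H.Adj u v → A v) :
    ∀ {u v : α}, H.Walk u v → A u → A v := by
  intro u v W
  induction W with
  | nil => exact id
  | @cons u u' v hadj W ih => intro hu; exact ih (hcl _ _ hu hadj)

lemma SG8_reachable_confine {α : Type*} (H : SimpleGraph α) (A : α → Prop)
    (hcl : ∀ u v, A u → H.Adj u v → A v) {u v : α} (h : H.Reachable u v) (hu : A u) : A v := by
  obtain ⟨W⟩ := h
  exact SG8_confine H A hcl W hu

-- ===== component machinery =====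

noncomputable def SG8_compSet (G : SimpleGraph V) (T : Set V) (v : V) (hv : v ∈ T) : Set V :=
  Subtype.val '' {x : ↥T | (G.induce T).connectedComponentMk x
      = (G.induce T).connectedComponentMk ⟨v, hv⟩}

lemma SG8_mem_compSet {G : SimpleGraph V} {T : Set V} {v : V} {hv : v ∈ T} {u : V} :
    u ∈ SG8_compSet G T v hv ↔
      ∃ hu : u ∈ T, (G.induce T).Reachable ⟨u, hu⟩ ⟨v, hv⟩ := by
  unfold SG8_compSet
  constructor
  · rintro ⟨⟨x, hx⟩, hmk, rfl⟩
    exact ⟨hx, (SimpleGraph.ConnectedComponent.eq).mp hmk⟩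
  · rintro ⟨hu, hr⟩
    exact ⟨⟨u, hu⟩, (SimpleGraph.ConnectedComponent.eq).mpr hr, rfl⟩

lemma SG8_compSet_isComponent (G : SimpleGraph V) (T : Set V) (v : V) (hv : v ∈ T) :
    IsComponentOf G T (SG8_compSet G T v hv) :=
  ⟨(G.induce T).connectedComponentMk ⟨v, hv⟩, rfl⟩

lemma SG8_self_mem_compSet {G : SimpleGraph V} {T : Set V} {v : V} (hv : v ∈ T) :
    v ∈ SG8_compSet G T v hv :=
  SG8_mem_compSet.mpr ⟨hv, Reachable.refl _⟩

lemma SG8_compSet_subset {G : SimpleGraph V} {T : Set V} {v : V} (hv : v ∈ T) :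
    SG8_compSet G T v hv ⊆ T := by
  rintro u hu
  obtain ⟨hu', _⟩ := SG8_mem_compSet.mp hu
  exact hu'

/-- a neighbour (inside `T`) of a member of the component is in the component. -/
lemma SG8_adj_mem_compSet {G : SimpleGraph V} {T : Set V} {v : V} {hv : v ∈ T} {a b : V}
    (ha : a ∈ SG8_compSet G T v hv) (hb : b ∈ T) (hadj : G.Adj a b) :
    b ∈ SG8_compSet G T v hv := by
  obtain ⟨ha', hr⟩ := SG8_mem_compSet.mp ha
  refine SG8_mem_compSet.mpr ⟨hb, Reachable.trans ?_ hr⟩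
  exact SimpleGraph.Adj.reachable (by simpa using hadj.symm)

/-- a connected (as induced subgraph) subset of `T` meeting the component is contained in it. -/
lemma SG8_subset_mem_compSet {G : SimpleGraph V} {T : Set V} {v : V} {hv : v ∈ T}
    {A : Set V} (hAT : A ⊆ T) (hconn : (G.induce A).Preconnected)
    {a : V} (haA : a ∈ A) (haC : a ∈ SG8_compSet G T v hv) :
    A ⊆ SG8_compSet G T v hv := by
  intro b hbB
  obtain ⟨ha', hr⟩ := SG8_mem_compSet.mp haC
  have hreach : (G.induce A).Reachable ⟨b, hbB⟩ ⟨a, haA⟩ := hconn _ _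
  have hreach' : (G.induce T).Reachable ⟨b, hAT hbB⟩ ⟨a, hAT haA⟩ :=
    hreach.map (G.induceHomOfLE hAT).toHom
  exact SG8_mem_compSet.mpr ⟨hAT hbB, hreach'.trans hr⟩

/-- for connected `S`, `S` itself is a component of `S`. -/
lemma SG8_isComponent_self {G : SimpleGraph V} {S : Set V}
    (hconn : (G.induce S).Connected) : IsComponentOf G S S := by
  obtain ⟨⟨s₀, hs₀⟩⟩ := hconn.nonempty
  refine ⟨(G.induce S).connectedComponentMk ⟨s₀, hs₀⟩, ?_⟩
  ext u
  constructor
  · intro hu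
    exact ⟨⟨u, hu⟩, (SimpleGraph.ConnectedComponent.eq).mpr (hconn.preconnected _ _), rfl⟩
  · rintro ⟨⟨x, hx⟩, _, rfl⟩
    exact hx

/-- every component of the complement of a nonempty set touches the set (G connected). -/
lemma SG8_comp_touches {G : SimpleGraph V} (hG : G.Connected) {S : Set V}
    (hS : S.Nonempty) {v : V} (hv : v ∈ Sᶜ) :
    Touches G S (SG8_compSet G Sᶜ v hv) := by
  obtain ⟨s₀, hs₀⟩ := hS
  obtain ⟨W⟩ := hG.preconnected v s₀
  have hv' : v ∈ Sᶜ := hv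
  obtain ⟨a, b, hab, hb, ha, hr⟩ :=
    SG8_boundary G (fun x => x ∈ Sᶜ) W hv' (by simpa using hs₀)
  have hbS : b ∈ S := by simpa using hb
  have haC : a ∈ SG8_compSet G Sᶜ v hv := by
    refine SG8_mem_compSet.mpr ⟨ha, ?_⟩
    exact (Reachable.symm (by exact hr))
  exact ⟨b, hbS, a, haC, hab.symm⟩

/-- the key inequality: for a connected safe set `S` and `v ∉ S`, the weight of the component
of `v` in the complement is at most the weight of `S`. -/
lemma SG8_safe_comp_le {G : SimpleGraph V} {w : V → ℝ} {S : Set V}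
    (hG : G.Connected) (hsafe : IsSafeSet G w S) (hconn : (G.induce S).Connected)
    {v : V} (hv : v ∈ Sᶜ) :
    setWeight w (SG8_compSet G Sᶜ v hv) ≤ setWeight w S :=
  hsafe.2.2 S (SG8_compSet G Sᶜ v hv) (SG8_isComponent_self hconn)
    (SG8_compSet_isComponent G Sᶜ v hv) (SG8_comp_touches hG hsafe.1 hv)

lemma SG8_isComp_eq_compSet {G : SimpleGraph V} {T D : Set V} (h : IsComponentOf G T D) :
    ∃ (v : V) (hv : v ∈ T), D = SG8_compSet G T v hv := by
  obtain ⟨c, rfl⟩ := h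
  obtain ⟨⟨v, hv⟩, hrep⟩ := c.exists_rep
  refine ⟨v, hv, ?_⟩
  subst hrep
  rfl

theorem stmt_8 (G : SimpleGraph V) (hG : G.Connected) (φ : V → Fin 5)
    (hφ : ContractibleTo G H2graph φ)
    (h2 : (G.induce (φ ⁻¹' {1})).Connected)
    (h4 : (G.induce (φ ⁻¹' {3})).Connected)
    (he12 : (edgePairs G (φ ⁻¹' {0}) (φ ⁻¹' {1})).ncard = 1)
    (he23 : (edgePairs G (φ ⁻¹' {1}) (φ ⁻¹' {2})).ncard = 1) :
    ¬ InGcs G := by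
  classical
  obtain ⟨hsurj, hiff⟩ := hφ
  -- H2 adjacency facts
  have hlist : ∀ i j : Fin 5, H2graph.Adj i j ↔
      (i ≠ j ∧ (((i, j) ∈ [((0 : Fin 5), (1 : Fin 5)), (1, 2), (2, 3), (0, 3), (3, 4)]) ∨
        ((j, i) ∈ [((0 : Fin 5), (1 : Fin 5)), (1, 2), (2, 3), (0, 3), (3, 4)]))) := by
    intro i j
    rw [H2graph]
    exact SimpleGraph.fromRel_adj _ i j
  have hH2_34 : H2graph.Adj 3 4 := by rw [hlist]; decide
  have hnbr1 : ∀ j : Fin 5, H2graph.Adj 1 j → j = 0 ∨ j = 2 := by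
    simp only [hlist]; decide
  have hnbr3 : ∀ j : Fin 5, H2graph.Adj 3 j → j = 0 ∨ j = 2 ∨ j = 4 := by
    simp only [hlist]; decide
  have hnbr4 : ∀ j : Fin 5, H2graph.Adj 4 j → j = 3 := by
    simp only [hlist]; decide
  have hnbr0 : ∀ j : Fin 5, H2graph.Adj 0 j → j = 1 ∨ j = 3 := by
    simp only [hlist]; decide
  -- cross-bag adjacency
  have hBag : ∀ u v : V, G.Adj u v → φ u = φ v ∨ H2graph.Adj (φ u) (φ v) := by
    intro u v hadj
    by_cases h : φ u = φ v
    · exact Or.inl h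
    · exact Or.inr ((hiff (φ u) (φ v) h).mp ⟨u, v, rfl, rfl, hadj⟩)
  -- the unique V1-V2 edge
  obtain ⟨p12, hp12⟩ := Set.ncard_eq_one.mp he12
  obtain ⟨x1, y⟩ := p12
  have hmem12 : (x1, y) ∈ edgePairs G (φ ⁻¹' {0}) (φ ⁻¹' {1}) := by
    rw [hp12]; exact rfl
  have hφx1 : φ x1 = 0 := by simpa using hmem12.1
  have hφy : φ y = 1 := by simpa using hmem12.2.1
  have hadj_x1y : G.Adj x1 y := hmem12.2.2
  have huniq12 : ∀ a b : V, φ a = 0 → φ b = 1 → G.Adj a b → a = x1 ∧ b = y := by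
    intro a b ha hb hab
    have hmem : (a, b) ∈ edgePairs G (φ ⁻¹' {0}) (φ ⁻¹' {1}) :=
      ⟨by simpa using ha, by simpa using hb, hab⟩
    rw [hp12] at hmem
    have := Set.mem_singleton_iff.mp hmem
    exact ⟨congrArg Prod.fst this, congrArg Prod.snd this⟩
  -- the unique V2-V3 edge
  obtain ⟨p23, hp23⟩ := Set.ncard_eq_one.mp he23
  obtain ⟨yp, z⟩ := p23
  have hmem23 : (yp, z) ∈ edgePairs G (φ ⁻¹' {1}) (φ ⁻¹' {2}) := by
    rw [hp23]; exact rfl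
  have hφyp : φ yp = 1 := by simpa using hmem23.1
  have hφz : φ z = 2 := by simpa using hmem23.2.1
  have hadj_ypz : G.Adj yp z := hmem23.2.2
  have huniq23 : ∀ a b : V, φ a = 1 → φ b = 2 → G.Adj a b → a = yp ∧ b = z := by
    intro a b ha hb hab
    have hmem : (a, b) ∈ edgePairs G (φ ⁻¹' {1}) (φ ⁻¹' {2}) :=
      ⟨by simpa using ha, by simpa using hb, hab⟩
    rw [hp23] at hmem
    have := Set.mem_singleton_iff.mp hmem
    exact ⟨congrArg Prod.fst this, congrArg Prod.snd this⟩
  -- a V4-V5 edge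
  obtain ⟨t, t5, hφt, hφt5, hadj_tt5⟩ := (hiff 3 4 (by decide)).mpr hH2_34
  -- distinctness
  have hne : ∀ {a b : V}, φ a ≠ φ b → a ≠ b := fun h hab => h (congrArg φ hab)
  have d_yx1 : y ≠ x1 := hne (by rw [hφy, hφx1]; decide)
  have d_yz : y ≠ z := hne (by rw [hφy, hφz]; decide)
  have d_yt : y ≠ t := hne (by rw [hφy, hφt]; decide)
  have d_yt5 : y ≠ t5 := hne (by rw [hφy, hφt5]; decide)
  have d_x1z : x1 ≠ z := hne (by rw [hφx1, hφz]; decide)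
  have d_x1t : x1 ≠ t := hne (by rw [hφx1, hφt]; decide)
  have d_x1t5 : x1 ≠ t5 := hne (by rw [hφx1, hφt5]; decide)
  have d_zt : z ≠ t := hne (by rw [hφz, hφt]; decide)
  have d_zt5 : z ≠ t5 := hne (by rw [hφz, hφt5]; decide)
  have d_tt5 : t ≠ t5 := hne (by rw [hφt, hφt5]; decide)
  -- the weight function
  set n : ℝ := (Fintype.card V : ℝ) with hn
  have hn0 : (0:ℝ) ≤ n := Nat.cast_nonneg _
  set eps : ℝ := 1 / (2 * (n + 1)) with heps
  have heps_pos : 0 < eps := by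
    rw [heps]; positivity
  have heps_le : eps ≤ 1/2 := by
    rw [heps]
    rw [div_le_div_iff₀ (by linarith) (by norm_num)]
    linarith
  set w : V → ℝ := fun v =>
    if v = y then 22 else if v = x1 then 14 else if v = z then 14
    else if v = t then 20 else if v = t5 then 19 else eps with hwdef
  have hwy : w y = 22 := by rw [hwdef]; simp
  have hwx1 : w x1 = 14 := by rw [hwdef]; simp [d_yx1.symm, d_yx1]
  have hwz : w z = 14 := by
    rw [hwdef]; simp [(d_yz.symm : z ≠ y), (d_x1z.symm : z ≠ x1)]
  have hwt : w t = 20 := by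
    rw [hwdef]; simp [(d_yt.symm : t ≠ y), (d_x1t.symm : t ≠ x1), (d_zt.symm : t ≠ z)]
  have hwt5 : w t5 = 19 := by
    rw [hwdef]
    simp [(d_yt5.symm : t5 ≠ y), (d_x1t5.symm : t5 ≠ x1), (d_zt5.symm : t5 ≠ z),
      (d_tt5.symm : t5 ≠ t)]
  have hwlight : ∀ v : V, v ≠ y → v ≠ x1 → v ≠ z → v ≠ t → v ≠ t5 → w v = eps := by
    intro v h1 h2 h3 h4 h5
    rw [hwdef]; simp [h1, h2, h3, h4, h5]
  have hwpos : ∀ v, 0 < w v := by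
    intro v
    rw [hwdef]
    dsimp only
    split_ifs <;> linarith [heps_pos]
  have hw0 : ∀ v, 0 ≤ w v := fun v => le_of_lt (hwpos v)
  have hwge : ∀ v, eps ≤ w v := by
    intro v
    rw [hwdef]
    dsimp only
    split_ifs <;> linarith
  -- light vertices
  have hHlight : ∀ v : V, v ∉ ({y, x1, z, t, t5} : Set V) → w v = eps := by
    intro v hv
    simp only [Set.mem_insert_iff, Set.mem_singleton_iff, not_or] at hv
    exact hwlight v hv.1 hv.2.1 hv.2.2.1 hv.2.2.2.1 hv.2.2.2.2
  have hlight_half : ∀ A : Set V, (∀ v ∈ A, v ∉ ({y, x1, z, t, t5} : Set V)) →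
      setWeight w A ≤ 1/2 := by
    intro A hA
    have h1 : setWeight w A ≤ n * eps := by
      have := SG8_setWeight_le_card_mul (A := A) (le_of_lt heps_pos)
        (fun v hv => le_of_eq (hHlight v (hA v hv)))
      simpa [hn] using this
    have h2 : n * eps ≤ 1/2 := by
      rw [heps, mul_one_div, div_le_div_iff₀ (by linarith) (by norm_num)]
      linarith
    linarith
  have hup : ∀ S B : Set V, (∀ v, v ∈ S → v ∈ ({y, x1, z, t, t5} : Set V) → v ∈ B) →
      setWeight w S ≤ setWeight w B + 1/2 := by
    intro S B hB
    rw [SG8_setWeight_split w S ({y, x1, z, t, t5} : Set V)]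
    have h1 : setWeight w (S ∩ {y, x1, z, t, t5}) ≤ setWeight w B :=
      SG8_setWeight_mono hw0 (fun v hv => hB v hv.1 hv.2)
    have h2 : setWeight w (S \ {y, x1, z, t, t5}) ≤ 1/2 :=
      hlight_half _ (fun v hv => hv.2)
    linarith
  -- the door lemma
  have hdoor : ∀ S : Set V, (G.induce S).Connected →
      ∀ a, a ∈ S → φ a = 1 → ∀ b, b ∈ S → φ b ≠ 1 →
      (y ∈ S ∧ x1 ∈ S) ∨ (yp ∈ S ∧ z ∈ S) := by
    intro S hc a haS ha1 b hbS hb1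
    obtain ⟨W⟩ := hc.preconnected ⟨a, haS⟩ ⟨b, hbS⟩
    obtain ⟨A, B, hAB, hBno, hA1, -⟩ :=
      SG8_boundary (G.induce S) (fun x => φ (↑x : V) = 1) W ha1 hb1
    have hadjAB : G.Adj ↑A ↑B := by simpa using hAB
    rcases hBag _ _ hadjAB with heq | hH
    · exact absurd (heq ▸ hA1) hBno
    · rw [hA1] at hH
      rcases hnbr1 _ hH with h0 | h2'
      · obtain ⟨hBx1, hAy⟩ := huniq12 ↑B ↑A h0 hA1 hadjAB.symm
        exact Or.inl ⟨hAy ▸ A.2, hBx1 ▸ B.2⟩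
      · obtain ⟨hAyp, hBz⟩ := huniq23 ↑A ↑B hA1 h2' hadjAB
        exact Or.inr ⟨hAyp ▸ A.2, hBz ▸ B.2⟩
  -- the disconnected safe set S0
  set S0 : Set V := insert y (φ ⁻¹' {3}) with hS0def
  have hyS0 : y ∈ S0 := Set.mem_insert _ _
  have hV4S0 : (φ ⁻¹' {3} : Set V) ⊆ S0 := Set.subset_insert _ _
  have htS0 : t ∈ S0 := hV4S0 (by simp [hφt])
  have hx1S0 : x1 ∉ S0 := by
    simp only [hS0def, Set.mem_insert_iff, Set.mem_preimage, Set.mem_singleton_iff, not_or]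
    exact ⟨d_yx1.symm, by rw [hφx1]; decide⟩
  have hT4 : ∀ v, v ∈ S0ᶜ → φ v ≠ 3 := by
    intro v hv h3
    exact hv (Set.mem_insert_iff.mpr (Or.inr (by simp [h3])))
  have hT4' : ∀ v, v ∈ S0ᶜ → v ≠ y := by
    intro v hv hvy
    exact hv (hvy ▸ hyS0)
  -- confinement of components of S0ᶜ
  have hconfV5 : ∀ (u0 u1 : ↥(S0ᶜ)), (G.induce S0ᶜ).Reachable u0 u1 →
      φ (↑u0 : V) = 4 → φ (↑u1 : V) = 4 := by
    intro u0 u1 hr h0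
    refine SG8_reachable_confine (G.induce S0ᶜ) (fun x => φ (↑x : V) = 4) ?_ hr h0
    intro a b ha hab
    have hadj : G.Adj ↑a ↑b := by simpa using hab
    rcases hBag _ _ hadj with heq | hH
    · rw [← heq, ha]
    · rw [ha] at hH
      exact absurd (hnbr4 _ hH) (hT4 _ b.2)
  have hconfV1 : ∀ (u0 u1 : ↥(S0ᶜ)), (G.induce S0ᶜ).Reachable u0 u1 →
      φ (↑u0 : V) = 0 → φ (↑u1 : V) = 0 := by
    intro u0 u1 hr h0
    refine SG8_reachable_confine (G.induce S0ᶜ) (fun x => φ (↑x : V) = 0) ?_ hr h0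
    intro a b ha hab
    have hadj : G.Adj ↑a ↑b := by simpa using hab
    rcases hBag _ _ hadj with heq | hH
    · rw [← heq, ha]
    · rw [ha] at hH
      rcases hnbr0 _ hH with h1 | h3
      · obtain ⟨-, hby⟩ := huniq12 ↑a ↑b ha h1 hadj
        exact absurd hby (hT4' _ b.2)
      · exact absurd h3 (hT4 _ b.2)
  -- S0 is a safe set
  have hS0safe : IsSafeSet G w S0 := by
    refine ⟨⟨y, hyS0⟩, ?_, ?_⟩
    · intro h
      exact hx1S0 (h ▸ Set.mem_univ x1)
    · intro C D hC hD _hT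
      -- lower bound for C
      have hCge : (20:ℝ) ≤ setWeight w C := by
        obtain ⟨v0, hv0, rfl⟩ := SG8_isComp_eq_compSet hC
        rcases Set.mem_insert_iff.mp hv0 with hv0y | hv0V4
        · have hyC : y ∈ SG8_compSet G S0 v0 hv0 := by
            subst hv0y; exact SG8_self_mem_compSet hv0
          have := SG8_setWeight_mono hw0 (Set.singleton_subset_iff.mpr hyC) (w := w)
          rw [SG8_setWeight_singleton] at this
          rw [hwy] at this
          linarith
        · have hsub : (φ ⁻¹' {3} : Set V) ⊆ SG8_compSet G S0 v0 hv0 :=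
            SG8_subset_mem_compSet hV4S0 h4.preconnected hv0V4 (SG8_self_mem_compSet hv0)
          have htC : t ∈ SG8_compSet G S0 v0 hv0 := hsub (by simp [hφt])
          have := SG8_setWeight_mono hw0 (Set.singleton_subset_iff.mpr htC) (w := w)
          rw [SG8_setWeight_singleton, hwt] at this
          linarith
      -- upper bound for D
      have hDle : setWeight w D ≤ 39/2 := by
        obtain ⟨d0, hd0, rfl⟩ := SG8_isComp_eq_compSet hD
        by_cases ht5D : t5 ∈ SG8_compSet G S0ᶜ d0 hd0
        · -- the component lives inside V5
          have hsub : SG8_compSet G S0ᶜ d0 hd0 ⊆ φ ⁻¹' {4} := by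
            intro u hu
            obtain ⟨hu', hru⟩ := SG8_mem_compSet.mp hu
            obtain ⟨ht5', hrt5⟩ := SG8_mem_compSet.mp ht5D
            have hr : (G.induce S0ᶜ).Reachable ⟨t5, ht5'⟩ ⟨u, hu'⟩ := hrt5.trans hru.symm
            have : φ u = 4 := hconfV5 _ _ hr hφt5
            simp [this]
          have h1 : setWeight w (SG8_compSet G S0ᶜ d0 hd0) ≤ setWeight w (φ ⁻¹' {4}) :=
            SG8_setWeight_mono hw0 hsub
          have h2 : setWeight w (φ ⁻¹' {4}) ≤ setWeight w {t5} + 1/2 := by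
            refine hup _ _ ?_
            intro v hvA hvH
            simp only [Set.mem_insert_iff, Set.mem_singleton_iff] at hvH
            simp only [Set.mem_preimage, Set.mem_singleton_iff] at hvA
            rcases hvH with rfl | rfl | rfl | rfl | rfl
            · rw [hφy] at hvA; exact absurd hvA (by decide)
            · rw [hφx1] at hvA; exact absurd hvA (by decide)
            · rw [hφz] at hvA; exact absurd hvA (by decide)
            · rw [hφt] at hvA; exact absurd hvA (by decide)
            · exact Set.mem_singleton _
          rw [SG8_setWeight_singleton, hwt5] at h2
          linarith
        · by_cases hx1D : x1 ∈ SG8_compSet G S0ᶜ d0 hd0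
          · -- the component lives inside V1
            have hsub : SG8_compSet G S0ᶜ d0 hd0 ⊆ φ ⁻¹' {0} := by
              intro u hu
              obtain ⟨hu', hru⟩ := SG8_mem_compSet.mp hu
              obtain ⟨hx1', hrx1⟩ := SG8_mem_compSet.mp hx1D
              have hr : (G.induce S0ᶜ).Reachable ⟨x1, hx1'⟩ ⟨u, hu'⟩ := hrx1.trans hru.symm
              have : φ u = 0 := hconfV1 _ _ hr hφx1
              simp [this]
            have h1 : setWeight w (SG8_compSet G S0ᶜ d0 hd0) ≤ setWeight w (φ ⁻¹' {0}) :=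
              SG8_setWeight_mono hw0 hsub
            have h2 : setWeight w (φ ⁻¹' {0}) ≤ setWeight w {x1} + 1/2 := by
              refine hup _ _ ?_
              intro v hvA hvH
              simp only [Set.mem_insert_iff, Set.mem_singleton_iff] at hvH
              simp only [Set.mem_preimage, Set.mem_singleton_iff] at hvA
              rcases hvH with rfl | rfl | rfl | rfl | rfl
              · rw [hφy] at hvA; exact absurd hvA (by decide)
              · exact Set.mem_singleton _
              · rw [hφz] at hvA; exact absurd hvA (by decide)
              · rw [hφt] at hvA; exact absurd hvA (by decide)
              · rw [hφt5] at hvA; exact absurd hvA (by decide)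
            rw [SG8_setWeight_singleton, hwx1] at h2
            linarith
          · -- heavy content of the component is at most {z}
            have h2 : setWeight w (SG8_compSet G S0ᶜ d0 hd0) ≤ setWeight w {z} + 1/2 := by
              refine hup _ _ ?_
              intro v hvA hvH
              simp only [Set.mem_insert_iff, Set.mem_singleton_iff] at hvH
              have hvc : v ∈ S0ᶜ := SG8_compSet_subset hd0 hvA
              rcases hvH with rfl | rfl | rfl | rfl | rfl
              · exact absurd rfl (hT4' _ hvc)
              · exact absurd hvA hx1D
              · exact Set.mem_singleton _
              · exact absurd hφt (hT4 _ hvc)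
              · exact absurd hvA ht5D
            rw [SG8_setWeight_singleton, hwz] at h2
            linarith
      linarith
  -- weight of S0
  have hS0w : setWeight w S0 ≤ 43 := by
    have hynotV4 : y ∉ (φ ⁻¹' {3} : Set V) := by
      simp only [Set.mem_preimage, Set.mem_singleton_iff]
      rw [hφy]; decide
    rw [hS0def, SG8_setWeight_insert hynotV4, hwy]
    have h2 : setWeight w (φ ⁻¹' {3}) ≤ setWeight w {t} + 1/2 := by
      refine hup _ _ ?_
      intro v hvA hvH
      simp only [Set.mem_insert_iff, Set.mem_singleton_iff] at hvH
      simp only [Set.mem_preimage, Set.mem_singleton_iff] at hvA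
      rcases hvH with rfl | rfl | rfl | rfl | rfl
      · rw [hφy] at hvA; exact absurd hvA (by decide)
      · rw [hφx1] at hvA; exact absurd hvA (by decide)
      · rw [hφz] at hvA; exact absurd hvA (by decide)
      · exact Set.mem_singleton _
      · rw [hφt5] at hvA; exact absurd hvA (by decide)
    rw [SG8_setWeight_singleton, hwt] at h2
    linarith
  -- small lower-bound helpers
  have hlow1 : ∀ (A : Set V) (a : V), a ∈ A → w a ≤ setWeight w A := by
    intro A a ha
    have := SG8_setWeight_mono hw0 (Set.singleton_subset_iff.mpr ha) (w := w)
    rwa [SG8_setWeight_singleton] at this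
  have hlow2 : ∀ (A : Set V) (a b : V), a ≠ b → a ∈ A → b ∈ A →
      w a + w b ≤ setWeight w A := by
    intro A a b hab ha hb
    have hsub : ({a, b} : Set V) ⊆ A := by
      intro v hv
      simp only [Set.mem_insert_iff, Set.mem_singleton_iff] at hv
      rcases hv with rfl | rfl
      exacts [ha, hb]
    have := SG8_setWeight_mono hw0 hsub (w := w)
    rwa [SG8_setWeight_pair hab] at this
  have hlow3 : ∀ (A : Set V) (a b c : V), a ≠ b → a ≠ c → b ≠ c →
      a ∈ A → b ∈ A → c ∈ A → w a + w b + w c ≤ setWeight w A := by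
    intro A a b c hab hac hbc ha hb hc
    have hsub : ({a, b, c} : Set V) ⊆ A := by
      intro v hv
      simp only [Set.mem_insert_iff, Set.mem_singleton_iff] at hv
      rcases hv with rfl | rfl | rfl
      exacts [ha, hb, hc]
    have := SG8_setWeight_mono hw0 hsub (w := w)
    rwa [SG8_setWeight_triple hab hac hbc] at this
  -- every connected safe set has weight at least 47
  have hconn47 : ∀ S : Set V, IsConnSafeSet G w S → (47:ℝ) ≤ setWeight w S := by
    rintro S ⟨hsafe, hconn⟩
    have hkill : ∀ (v : V) (hv : v ∈ Sᶜ),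
        setWeight w (SG8_compSet G Sᶜ v hv) ≤ setWeight w S :=
      fun v hv => SG8_safe_comp_le hG hsafe hconn hv
    by_cases hPY : y ∈ S
    · by_cases hPB : t ∈ S
      · rcases hdoor S hconn y hPY hφy t hPB (by rw [hφt]; decide) with ⟨-, hx1S⟩ | ⟨-, hzS⟩
        · have := hlow3 S y x1 t d_yx1 d_yt d_x1t hPY hx1S hPB
          rw [hwy, hwx1, hwt] at this; linarith
        · have := hlow3 S y z t d_yz d_yt d_zt hPY hzS hPB
          rw [hwy, hwz, hwt] at this; linarith
      · by_cases hPR : t5 ∈ S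
        · rcases hdoor S hconn y hPY hφy t5 hPR (by rw [hφt5]; decide) with ⟨-, hx1S⟩ | ⟨-, hzS⟩
          · have := hlow3 S y x1 t5 d_yx1 d_yt5 d_x1t5 hPY hx1S hPR
            rw [hwy, hwx1, hwt5] at this; linarith
          · have := hlow3 S y z t5 d_yz d_yt5 d_zt5 hPY hzS hPR
            rw [hwy, hwz, hwt5] at this; linarith
        · by_cases hPXZ : x1 ∈ S ∧ z ∈ S
          · have := hlow3 S y x1 z d_yx1 d_yz d_x1z hPY hPXZ.1 hPXZ.2
            rw [hwy, hwx1, hwz] at this; linarith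
          · exfalso
            have htc : t ∈ Sᶜ := (Set.mem_compl_iff _ _).mpr hPB
            have ht5c : t5 ∈ Sᶜ := (Set.mem_compl_iff _ _).mpr hPR
            have ht5K : t5 ∈ SG8_compSet G Sᶜ t htc :=
              SG8_adj_mem_compSet (SG8_self_mem_compSet htc) ht5c hadj_tt5
            have h39 : (39:ℝ) ≤ setWeight w (SG8_compSet G Sᶜ t htc) := by
              have := hlow2 _ t t5 d_tt5 (SG8_self_mem_compSet htc) ht5K
              rw [hwt, hwt5] at this; linarith
            have hKS := hkill t htc
            rcases not_and_or.mp hPXZ with hx1n | hzn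
            · have hupp : setWeight w S ≤ setWeight w ({y, z} : Set V) + 1/2 := by
                refine hup _ _ ?_
                intro v hvS hvH
                simp only [Set.mem_insert_iff, Set.mem_singleton_iff] at hvH ⊢
                rcases hvH with rfl | rfl | rfl | rfl | rfl
                · exact Or.inl rfl
                · exact absurd hvS hx1n
                · exact Or.inr rfl
                · exact absurd hvS hPB
                · exact absurd hvS hPR
              rw [SG8_setWeight_pair d_yz, hwy, hwz] at hupp
              linarith
            · have hupp : setWeight w S ≤ setWeight w ({y, x1} : Set V) + 1/2 := by
                refine hup _ _ ?_
                intro v hvS hvH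
                simp only [Set.mem_insert_iff, Set.mem_singleton_iff] at hvH ⊢
                rcases hvH with rfl | rfl | rfl | rfl | rfl
                · exact Or.inl rfl
                · exact Or.inr rfl
                · exact absurd hvS hzn
                · exact absurd hvS hPB
                · exact absurd hvS hPR
              rw [SG8_setWeight_pair d_yx1, hwy, hwx1] at hupp
              linarith
    · by_cases hPX : x1 ∈ S
      · by_cases hPZ : z ∈ S
        · by_cases hPB : t ∈ S
          · have := hlow3 S x1 z t d_x1z d_x1t d_zt hPX hPZ hPB
            rw [hwx1, hwz, hwt] at this; linarith
          · by_cases hPR : t5 ∈ S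
            · have := hlow3 S x1 z t5 d_x1z d_x1t5 d_zt5 hPX hPZ hPR
              rw [hwx1, hwz, hwt5] at this; linarith
            · exfalso
              have htc : t ∈ Sᶜ := (Set.mem_compl_iff _ _).mpr hPB
              have ht5c : t5 ∈ Sᶜ := (Set.mem_compl_iff _ _).mpr hPR
              have ht5K : t5 ∈ SG8_compSet G Sᶜ t htc :=
                SG8_adj_mem_compSet (SG8_self_mem_compSet htc) ht5c hadj_tt5
              have h39 : (39:ℝ) ≤ setWeight w (SG8_compSet G Sᶜ t htc) := by
                have := hlow2 _ t t5 d_tt5 (SG8_self_mem_compSet htc) ht5K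
                rw [hwt, hwt5] at this; linarith
              have hKS := hkill t htc
              have hupp : setWeight w S ≤ setWeight w ({x1, z} : Set V) + 1/2 := by
                refine hup _ _ ?_
                intro v hvS hvH
                simp only [Set.mem_insert_iff, Set.mem_singleton_iff] at hvH ⊢
                rcases hvH with rfl | rfl | rfl | rfl | rfl
                · exact absurd hvS hPY
                · exact Or.inl rfl
                · exact Or.inr rfl
                · exact absurd hvS hPB
                · exact absurd hvS hPR
              rw [SG8_setWeight_pair d_x1z, hwx1, hwz] at hupp
              linarith
        · by_cases hPBR : t ∈ S ∧ t5 ∈ S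
          · have := hlow3 S x1 t t5 d_x1t d_x1t5 d_tt5 hPX hPBR.1 hPBR.2
            rw [hwx1, hwt, hwt5] at this; linarith
          · exfalso
            have hnoV2 : ∀ a ∈ S, φ a ≠ 1 := by
              intro a haS ha1
              rcases hdoor S hconn a haS ha1 x1 hPX (by rw [hφx1]; decide) with
                ⟨hyS, -⟩ | ⟨-, hzS⟩
              · exact hPY hyS
              · exact hPZ hzS
            have hyc : y ∈ Sᶜ := (Set.mem_compl_iff _ _).mpr hPY
            have hV2c : (φ ⁻¹' {1} : Set V) ⊆ Sᶜ := by
              intro v hv hvS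
              exact hnoV2 v hvS (by simpa using hv)
            have hV2K : (φ ⁻¹' {1} : Set V) ⊆ SG8_compSet G Sᶜ y hyc :=
              SG8_subset_mem_compSet hV2c h2.preconnected
                (show y ∈ φ ⁻¹' {1} by simp [hφy]) (SG8_self_mem_compSet hyc)
            have hzc : z ∈ Sᶜ := (Set.mem_compl_iff _ _).mpr hPZ
            have hzK : z ∈ SG8_compSet G Sᶜ y hyc :=
              SG8_adj_mem_compSet (hV2K (show yp ∈ φ ⁻¹' {1} by simp [hφyp])) hzc hadj_ypz
            have h36 : (36:ℝ) ≤ setWeight w (SG8_compSet G Sᶜ y hyc) := by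
              have := hlow2 _ y z d_yz (SG8_self_mem_compSet hyc) hzK
              rw [hwy, hwz] at this; linarith
            have hKS := hkill y hyc
            rcases not_and_or.mp hPBR with htn | ht5n
            · have hupp : setWeight w S ≤ setWeight w ({x1, t5} : Set V) + 1/2 := by
                refine hup _ _ ?_
                intro v hvS hvH
                simp only [Set.mem_insert_iff, Set.mem_singleton_iff] at hvH ⊢
                rcases hvH with rfl | rfl | rfl | rfl | rfl
                · exact absurd hvS hPY
                · exact Or.inl rfl
                · exact absurd hvS hPZ
                · exact absurd hvS htn
                · exact Or.inr rfl
              rw [SG8_setWeight_pair d_x1t5, hwx1, hwt5] at hupp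
              linarith
            · have hupp : setWeight w S ≤ setWeight w ({x1, t} : Set V) + 1/2 := by
                refine hup _ _ ?_
                intro v hvS hvH
                simp only [Set.mem_insert_iff, Set.mem_singleton_iff] at hvH ⊢
                rcases hvH with rfl | rfl | rfl | rfl | rfl
                · exact absurd hvS hPY
                · exact Or.inl rfl
                · exact absurd hvS hPZ
                · exact Or.inr rfl
                · exact absurd hvS ht5n
              rw [SG8_setWeight_pair d_x1t, hwx1, hwt] at hupp
              linarith
      · by_cases hPZ : z ∈ S
        · by_cases hPBR : t ∈ S ∧ t5 ∈ S
          · have := hlow3 S z t t5 d_zt d_zt5 d_tt5 hPZ hPBR.1 hPBR.2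
            rw [hwz, hwt, hwt5] at this; linarith
          · exfalso
            have hyc : y ∈ Sᶜ := (Set.mem_compl_iff _ _).mpr hPY
            have hx1c : x1 ∈ Sᶜ := (Set.mem_compl_iff _ _).mpr hPX
            have hx1K : x1 ∈ SG8_compSet G Sᶜ y hyc :=
              SG8_adj_mem_compSet (SG8_self_mem_compSet hyc) hx1c hadj_x1y.symm
            have h36 : (36:ℝ) ≤ setWeight w (SG8_compSet G Sᶜ y hyc) := by
              have := hlow2 _ y x1 d_yx1 (SG8_self_mem_compSet hyc) hx1K
              rw [hwy, hwx1] at this; linarith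
            have hKS := hkill y hyc
            rcases not_and_or.mp hPBR with htn | ht5n
            · have hupp : setWeight w S ≤ setWeight w ({z, t5} : Set V) + 1/2 := by
                refine hup _ _ ?_
                intro v hvS hvH
                simp only [Set.mem_insert_iff, Set.mem_singleton_iff] at hvH ⊢
                rcases hvH with rfl | rfl | rfl | rfl | rfl
                · exact absurd hvS hPY
                · exact absurd hvS hPX
                · exact Or.inl rfl
                · exact absurd hvS htn
                · exact Or.inr rfl
              rw [SG8_setWeight_pair d_zt5, hwz, hwt5] at hupp
              linarith
            · have hupp : setWeight w S ≤ setWeight w ({z, t} : Set V) + 1/2 := by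
                refine hup _ _ ?_
                intro v hvS hvH
                simp only [Set.mem_insert_iff, Set.mem_singleton_iff] at hvH ⊢
                rcases hvH with rfl | rfl | rfl | rfl | rfl
                · exact absurd hvS hPY
                · exact absurd hvS hPX
                · exact Or.inl rfl
                · exact Or.inr rfl
                · exact absurd hvS ht5n
              rw [SG8_setWeight_pair d_zt, hwz, hwt] at hupp
              linarith
        · by_cases hV2S : ∃ a ∈ S, φ a = 1
          · -- S is contained in the bag V2 and is all light
            have hallV2 : ∀ b ∈ S, φ b = 1 := by
              intro b hbS
              by_contra hb1
              obtain ⟨a, haS, ha1⟩ := hV2S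
              rcases hdoor S hconn a haS ha1 b hbS hb1 with ⟨hyS, -⟩ | ⟨-, hzS⟩
              · exact hPY hyS
              · exact hPZ hzS
            exfalso
            have htc : t ∈ Sᶜ := by
              intro h
              have := hallV2 t h
              rw [hφt] at this
              exact absurd this (by decide)
            have ht5c : t5 ∈ Sᶜ := by
              intro h
              have := hallV2 t5 h
              rw [hφt5] at this
              exact absurd this (by decide)
            have ht5K : t5 ∈ SG8_compSet G Sᶜ t htc :=
              SG8_adj_mem_compSet (SG8_self_mem_compSet htc) ht5c hadj_tt5
            have h39 : (39:ℝ) ≤ setWeight w (SG8_compSet G Sᶜ t htc) := by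
              have := hlow2 _ t t5 d_tt5 (SG8_self_mem_compSet htc) ht5K
              rw [hwt, hwt5] at this; linarith
            have hKS := hkill t htc
            have hupp : setWeight w S ≤ setWeight w (∅ : Set V) + 1/2 := by
              refine hup _ _ ?_
              intro v hvS hvH
              simp only [Set.mem_insert_iff, Set.mem_singleton_iff] at hvH
              rcases hvH with rfl | rfl | rfl | rfl | rfl
              · exact absurd hvS hPY
              · exact absurd hvS hPX
              · exact absurd hvS hPZ
              · exact absurd hvS (fun h => htc h)
              · exact absurd hvS (fun h => ht5c h)
            rw [SG8_setWeight_empty] at hupp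
            linarith
          · push_neg at hV2S
            exfalso
            have hyc : y ∈ Sᶜ := (Set.mem_compl_iff _ _).mpr hPY
            have hV2c : (φ ⁻¹' {1} : Set V) ⊆ Sᶜ := by
              intro v hv hvS
              exact hV2S v hvS (by simpa using hv)
            have hV2K : (φ ⁻¹' {1} : Set V) ⊆ SG8_compSet G Sᶜ y hyc :=
              SG8_subset_mem_compSet hV2c h2.preconnected
                (show y ∈ φ ⁻¹' {1} by simp [hφy]) (SG8_self_mem_compSet hyc)
            have hx1c : x1 ∈ Sᶜ := (Set.mem_compl_iff _ _).mpr hPX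
            have hx1K : x1 ∈ SG8_compSet G Sᶜ y hyc :=
              SG8_adj_mem_compSet (SG8_self_mem_compSet hyc) hx1c hadj_x1y.symm
            have hzc : z ∈ Sᶜ := (Set.mem_compl_iff _ _).mpr hPZ
            have hzK : z ∈ SG8_compSet G Sᶜ y hyc :=
              SG8_adj_mem_compSet (hV2K (show yp ∈ φ ⁻¹' {1} by simp [hφyp])) hzc hadj_ypz
            have h50 : (50:ℝ) ≤ setWeight w (SG8_compSet G Sᶜ y hyc) := by
              have := hlow3 _ y x1 z d_yx1 d_yz d_x1z (SG8_self_mem_compSet hyc) hx1K hzK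
              rw [hwy, hwx1, hwz] at this; linarith
            have hKS := hkill y hyc
            have hupp : setWeight w S ≤ setWeight w ({t, t5} : Set V) + 1/2 := by
              refine hup _ _ ?_
              intro v hvS hvH
              simp only [Set.mem_insert_iff, Set.mem_singleton_iff] at hvH ⊢
              rcases hvH with rfl | rfl | rfl | rfl | rfl
              · exact absurd hvS hPY
              · exact absurd hvS hPX
              · exact absurd hvS hPZ
              · exact Or.inl rfl
              · exact Or.inr rfl
            rw [SG8_setWeight_pair d_tt5, hwt, hwt5] at hupp
            linarith
  -- conclusion
  intro hIn
  have heq := hIn w hwpos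
  have hbdd : BddBelow (setWeight w '' {S | IsSafeSet G w S}) := by
    refine ⟨0, ?_⟩
    rintro x ⟨S, -, rfl⟩
    exact SG8_setWeight_nonneg hw0 S
  have hsle : safeNumber G w ≤ 43 :=
    le_trans (csInf_le hbdd ⟨S0, hS0safe, rfl⟩) hS0w
  have hsge : eps ≤ safeNumber G w := by
    refine le_csInf ⟨_, ⟨S0, hS0safe, rfl⟩⟩ ?_
    rintro x ⟨S, hS, rfl⟩
    obtain ⟨v, hv⟩ := hS.1
    exact le_trans (hwge v) (hlow1 S v hv)
  by_cases hne : (setWeight w '' {S | IsConnSafeSet G w S}).Nonempty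
  · have h47 : (47:ℝ) ≤ connSafeNumber G w := by
      refine le_csInf hne ?_
      rintro x ⟨S, hS, rfl⟩
      exact hconn47 S hS
    rw [← heq] at h47
    linarith
  · have hz0 : connSafeNumber G w = 0 := by
      rw [connSafeNumber, Set.not_nonempty_iff_eq_empty.mp hne, Real.sInf_empty]
    rw [heq, hz0] at hsge
    linarith [heps_pos]
end
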